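/- arXiv:2405.05448 — 5 statements merged into one kernel-verified Lean document; each statement's English description precedes it below -/
import Mathlib

section
/- Let H be symmetric positive definite, L satisfy Lᵀ H + H L = 0, and G = ∑_{k=0}^{s} a_k (hL)^k with a_0 = 1. Then for every vector u, ‖G u‖_H² = ‖u‖_H² + ∑_{k=1}^{s} b_k h^{2k} ‖L^k u‖_H², where b_k = ∑_{i=max(0,2k-s)}^{min(2k,s)} (-1)^{k+i} a_i a_{2k-i}. -/
open Matrix Finset

lemma scalar_id (s : ℕ) (a : ℕ → ℝ) (h : ℝ) (f : ℕ → ℝ)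
    (hodd : ∀ m, Odd m → f m = 0) :
    ∑ i ∈ range (s+1), ∑ j ∈ range (s+1),
        (a i * h^i) * (a j * h^j) * ((-1:ℝ)^i * f (i+j))
    = ∑ k ∈ range (s+1),
        (∑ i ∈ Icc (max 0 (2*k-s)) (min (2*k) s),
          (-1:ℝ)^(k+i) * a i * a (2*k-i)) * h^(2*k) * ((-1:ℝ)^k * f (2*k)) := by
  have hrhs : ∀ k, (∑ i ∈ Icc (max 0 (2*k-s)) (min (2*k) s),
          (-1:ℝ)^(k+i) * a i * a (2*k-i)) * h^(2*k) * ((-1:ℝ)^k * f (2*k))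
      = ∑ i ∈ Icc (max 0 (2*k-s)) (min (2*k) s),
          (-1:ℝ)^(k+i) * a i * a (2*k-i) * h^(2*k) * ((-1:ℝ)^k * f (2*k)) := by
    intro k; rw [sum_mul, sum_mul]
  simp only [hrhs]
  rw [← Finset.sum_product']
  rw [← Finset.sum_filter_add_sum_filter_not (range (s+1) ×ˢ range (s+1))
      (fun p => Even (p.1 + p.2))]
  have hzero : ∑ p ∈ (range (s+1) ×ˢ range (s+1)).filter (fun p => ¬ Even (p.1 + p.2)),
      (a p.1 * h^p.1) * (a p.2 * h^p.2) * ((-1:ℝ)^p.1 * f (p.1+p.2)) = 0 := by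
    apply Finset.sum_eq_zero
    intro p hp
    simp only [mem_filter] at hp
    rw [hodd _ (Nat.odd_iff.2 (by have := hp.2; rw [Nat.even_iff] at this; omega))]
    ring
  rw [hzero, add_zero, Finset.sum_sigma']
  refine Finset.sum_nbij' (fun p => ⟨(p.1 + p.2)/2, p.1⟩)
    (fun q => (q.2, 2*q.1 - q.2)) ?_ ?_ ?_ ?_ ?_
  · rintro ⟨i, j⟩ hp
    simp only [mem_filter, mem_product, mem_range, Nat.even_iff] at hp
    simp only [mem_sigma, mem_range, mem_Icc, le_min_iff, max_le_iff]
    omega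
  · rintro ⟨k, i⟩ hq
    simp only [mem_sigma, mem_range, mem_Icc, le_min_iff, max_le_iff] at hq
    simp only [mem_filter, mem_product, mem_range, Nat.even_iff]
    omega
  · rintro ⟨i, j⟩ hp
    simp only [mem_filter, mem_product, mem_range, Nat.even_iff] at hp
    have hj2 : 2*((i+j)/2) - i = j := by omega
    simp [hj2]
  · rintro ⟨k, i⟩ hq
    simp only [mem_sigma, mem_range, mem_Icc, le_min_iff, max_le_iff] at hq
    have hk2 : (i + (2*k - i))/2 = k := by omega
    simp [hk2]
  · rintro ⟨i, j⟩ hp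
    simp only [mem_filter, mem_product, mem_range, Nat.even_iff] at hp
    dsimp only
    have h2k : 2 * ((i + j) / 2) = i + j := by omega
    simp only [h2k, Nat.add_sub_cancel_left]
    have hs : (-1:ℝ)^((i+j)/2 + i) * ((-1:ℝ)^((i+j)/2)) = (-1:ℝ)^i := by
      rw [pow_add, mul_comm, ← mul_assoc, ← pow_add, ← two_mul, pow_mul]
      norm_num
    rw [pow_add h]
    linear_combination (-(a i * a j * h^i * h^j * f (i+j))) * hs


theorem energy_identity {n : ℕ}
    (H L : Matrix (Fin n) (Fin n) ℝ)
    (hH : H.PosDef) (hHsymm : H.IsSymm)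
    (hL : Lᵀ * H + H * L = 0)
    (s : ℕ) (a : ℕ → ℝ) (h : ℝ) (ha0 : a 0 = 1)
    (G : Matrix (Fin n) (Fin n) ℝ)
    (hG : G = ∑ k ∈ Finset.range (s + 1), a k • (h • L) ^ k)
    (b : ℕ → ℝ)
    (hb : ∀ k, b k = ∑ i ∈ Finset.Icc (max 0 (2 * k - s)) (min (2 * k) s),
      (-1 : ℝ) ^ (k + i) * a i * a (2 * k - i))
    (u : Fin n → ℝ) :
    (G *ᵥ u) ⬝ᵥ (H *ᵥ (G *ᵥ u)) =
      u ⬝ᵥ (H *ᵥ u) +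
        ∑ k ∈ Finset.Icc 1 s,
          b k * h ^ (2 * k) * ((L ^ k *ᵥ u) ⬝ᵥ (H *ᵥ (L ^ k *ᵥ u))) := by
  have hmv : ∀ (A : Matrix (Fin n) (Fin n) ℝ) (v w : Fin n → ℝ),
      (A *ᵥ v) ⬝ᵥ w = v ⬝ᵥ (Aᵀ *ᵥ w) := by
    intro A v w
    rw [dotProduct_mulVec v Aᵀ w, vecMul_transpose]
  have hLH : Lᵀ * H = -(H * L) := by
    have := hL
    rw [add_eq_zero_iff_eq_neg] at this
    exact this
  have hmove : ∀ v w : Fin n → ℝ,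
      (L *ᵥ v) ⬝ᵥ (H *ᵥ w) = -(v ⬝ᵥ (H *ᵥ (L *ᵥ w))) := by
    intro v w
    rw [hmv L v (H *ᵥ w), mulVec_mulVec, hLH, neg_mulVec, dotProduct_neg,
      ← mulVec_mulVec]
  have key : ∀ (i : ℕ) (v w : Fin n → ℝ),
      (L^i *ᵥ v) ⬝ᵥ (H *ᵥ w) = (-1:ℝ)^i * (v ⬝ᵥ (H *ᵥ (L^i *ᵥ w))) := by
    intro i
    induction i with
    | zero => intro v w; simp
    | succ i ih =>
      intro v w
      have h1 : L^(i+1) *ᵥ v = L^i *ᵥ (L *ᵥ v) := by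
        rw [mulVec_mulVec, ← pow_succ]
      rw [h1, ih, hmove,
        show L *ᵥ (L^i *ᵥ w) = L^(i+1) *ᵥ w from by rw [mulVec_mulVec, ← pow_succ'],
        pow_succ]
      ring
  have hsymQ : ∀ v w : Fin n → ℝ, v ⬝ᵥ (H *ᵥ w) = w ⬝ᵥ (H *ᵥ v) := by
    intro v w
    rw [dotProduct_mulVec]
    nth_rewrite 1 [← hHsymm]
    rw [vecMul_transpose, dotProduct_comm]
  have hodd : ∀ m, Odd m → u ⬝ᵥ (H *ᵥ (L^m *ᵥ u)) = 0 := by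
    intro m hm
    have e1 := key m u u
    have e2 : u ⬝ᵥ (H *ᵥ (L^m *ᵥ u)) = (L^m *ᵥ u) ⬝ᵥ (H *ᵥ u) := hsymQ _ _
    rw [e1, hm.neg_one_pow] at e2
    linarith
  have hsum_mv : ∀ (t : Finset ℕ) (M : ℕ → Matrix (Fin n) (Fin n) ℝ),
      (∑ k ∈ t, M k) *ᵥ u = ∑ k ∈ t, (M k *ᵥ u) := by
    intro t M
    ext x
    simp [mulVec, dotProduct, Matrix.sum_apply, Finset.sum_mul]
    exact Finset.sum_comm
  have hGu : G *ᵥ u = ∑ k ∈ Finset.range (s+1), (a k * h^k) • (L^k *ᵥ u) := by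
    rw [hG, hsum_mv]
    apply Finset.sum_congr rfl
    intro k _
    rw [smul_pow, smul_smul, smul_mulVec]
  have hdl : ∀ (t : Finset ℕ) (g : ℕ → Fin n → ℝ) (w : Fin n → ℝ),
      (∑ i ∈ t, g i) ⬝ᵥ w = ∑ i ∈ t, g i ⬝ᵥ w := by
    intro t g w
    simp [dotProduct, Finset.sum_apply, Finset.sum_mul]
    exact Finset.sum_comm
  have hdr : ∀ (t : Finset ℕ) (g : ℕ → Fin n → ℝ) (v : Fin n → ℝ),
      v ⬝ᵥ (∑ i ∈ t, g i) = ∑ i ∈ t, v ⬝ᵥ g i := by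
    intro t g v
    simp [dotProduct, Finset.sum_apply, Finset.mul_sum]
    exact Finset.sum_comm
  have hHsum : H *ᵥ (∑ k ∈ Finset.range (s+1), (a k * h^k) • (L^k *ᵥ u))
      = ∑ k ∈ Finset.range (s+1), (a k * h^k) • (H *ᵥ (L^k *ᵥ u)) := by
    rw [← mulVecLin_apply, map_sum]
    simp [mulVecLin_apply]
  have expand : (G *ᵥ u) ⬝ᵥ (H *ᵥ (G *ᵥ u))
      = ∑ i ∈ range (s+1), ∑ j ∈ range (s+1),
          (a i * h^i) * (a j * h^j) * ((-1:ℝ)^i * (u ⬝ᵥ (H *ᵥ (L^(i+j) *ᵥ u)))) := by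
    rw [hGu, hHsum, hdl]
    apply Finset.sum_congr rfl
    intro i _
    rw [hdr]
    apply Finset.sum_congr rfl
    intro j _
    rw [smul_dotProduct, dotProduct_smul, key i u (L^j *ᵥ u),
      show L^i *ᵥ (L^j *ᵥ u) = L^(i+j) *ᵥ u from by rw [mulVec_mulVec, ← pow_add]]
    simp only [smul_eq_mul]
    ring
  rw [expand, scalar_id s a h (fun m => u ⬝ᵥ (H *ᵥ (L^m *ᵥ u))) hodd]
  simp only [← hb]
  have hsplit : range (s+1) = insert 0 (Icc 1 s) := by
    ext x; simp [Finset.mem_insert]; omega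
  rw [hsplit, Finset.sum_insert (by simp)]
  have hb0 : b 0 = 1 := by
    rw [hb]
    norm_num [ha0]
  congr 1
  · simp [hb0]
  · apply Finset.sum_congr rfl
    intro k _
    rw [key k u (L^k *ᵥ u),
      show L^k *ᵥ (L^k *ᵥ u) = L^(2*k) *ᵥ u from by rw [mulVec_mulVec, ← pow_add, ← two_mul]]
end

section
/- If s ≥ 2 is even and a_k = 1/k! for 0 ≤ k ≤ s, then the coefficient b_{s/2+1} = ∑_{i=max(0,s+2-s)}^{min(s+2,s)} (-1)^{s/2+1+i} a_i a_{s+2-i} equals (-1)^{s/2+1} (2/(s+1)! - 2/(s+2)!), which is nonzero. -/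
/-!
Up to the sign `(-1) ^ (s / 2 + 1)`, the coefficient is the middle part of the alternating sum
`∑_{i=0}^{s+2} (-1)^i / (i! (s+2-i)!) = (1 - 1)^(s+2) / (s+2)! = 0`. Since `s` is even, the four
omitted boundary terms `i = 0, 1, s+1, s+2` add up to `2/(s+2)! - 2/(s+1)!`, so the middle part is
`2/(s+1)! - 2/(s+2)!`, which is positive because `(s+1)! < (s+2)!`.
-/

open Finset

theorem sum_Icc_two_eq_sum_range_sub_ends {M : Type*} [AddCommGroup M] (f : ℕ → M) {m : ℕ}
    (hm : 1 ≤ m) :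
    ∑ i ∈ Icc 2 m, f i = ∑ i ∈ range (m + 3), f i - (f 0 + f 1 + f (m + 1) + f (m + 2)) := by
  rw [← Ico_add_one_right_eq_Icc, sum_range_succ, sum_range_succ,
    ← sum_range_add_sum_Ico f (by omega : 2 ≤ m + 1), sum_range_succ, sum_range_one]
  abel

section Field

variable {K : Type*} [Field K] [CharZero K]

theorem sum_range_neg_one_pow_div_factorial_mul_factorial {n : ℕ} (hn : n ≠ 0) :
    ∑ i ∈ range (n + 1), (-1 : K) ^ i / (i.factorial * (n - i).factorial) = 0 := by
  have hchoose : ∑ i ∈ range (n + 1), (-1 : K) ^ i * (n.choose i : K) = 0 := by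
    exact_mod_cast (Int.alternating_sum_range_choose (n := n)).trans (if_neg hn)
  have hterm : ∀ i ∈ range (n + 1), (-1 : K) ^ i / (i.factorial * (n - i).factorial) =
      (-1 : K) ^ i * (n.choose i : K) / n.factorial := fun i hi => by
    rw [Nat.cast_choose K (Nat.lt_succ_iff.mp (mem_range.mp hi))]
    have : (n.factorial : K) ≠ 0 := Nat.cast_ne_zero.mpr n.factorial_ne_zero
    field_simp
  rw [sum_congr rfl hterm, ← sum_div, hchoose, zero_div]

theorem sum_Icc_two_neg_one_pow_div_factorial_mul_factorial {s : ℕ} (hs : s ≠ 0) (hse : Even s) :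
    ∑ i ∈ Icc 2 s, (-1 : K) ^ i / (i.factorial * (s + 2 - i).factorial) =
      2 / (s + 1).factorial - 2 / (s + 2).factorial := by
  rw [sum_Icc_two_eq_sum_range_sub_ends _ (Nat.one_le_iff_ne_zero.mpr hs),
    sum_range_neg_one_pow_div_factorial_mul_factorial (by omega : s + 2 ≠ 0),
    show s + 2 - 1 = s + 1 by omega, show s + 2 - (s + 1) = 1 by omega, Nat.sub_self,
    hse.add_one.neg_one_pow, (hse.add even_two).neg_one_pow]
  simp only [Nat.sub_zero, Nat.factorial_zero, Nat.factorial_one, Nat.cast_one]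
  ring

end Field

theorem two_div_factorial_succ_sub_two_div_factorial_succ_succ_pos {K : Type*} [Field K]
    [LinearOrder K] [IsStrictOrderedRing K] (n : ℕ) :
    0 < 2 / ((n + 1).factorial : K) - 2 / (n + 2).factorial := by
  have hlt : ((n + 1).factorial : K) < (n + 2).factorial := by
    exact_mod_cast (Nat.factorial_lt n.succ_pos).mpr (Nat.lt_succ_self _)
  exact sub_pos.mpr (div_lt_div_of_pos_left two_pos (by positivity) hlt)

theorem leading_coefficient_taylor (s : ℕ) (hs : 2 ≤ s) (hse : Even s)
    (a : ℕ → ℝ) (ha : ∀ k ≤ s, a k = 1 / (Nat.factorial k : ℝ)) :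
    (∑ i ∈ Finset.Icc (max 0 (s + 2 - s)) (min (s + 2) s),
          (-1 : ℝ) ^ (s / 2 + 1 + i) * a i * a (s + 2 - i)) =
        (-1 : ℝ) ^ (s / 2 + 1) *
          (2 / (Nat.factorial (s + 1) : ℝ) - 2 / (Nat.factorial (s + 2) : ℝ)) ∧
      (-1 : ℝ) ^ (s / 2 + 1) *
          (2 / (Nat.factorial (s + 1) : ℝ) - 2 / (Nat.factorial (s + 2) : ℝ)) ≠ 0 := by
  refine ⟨?_, mul_ne_zero (pow_ne_zero _ (by norm_num))
    (two_div_factorial_succ_sub_two_div_factorial_succ_succ_pos s).ne'⟩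
  rw [show max 0 (s + 2 - s) = 2 by omega, show min (s + 2) s = s by omega,
    ← sum_Icc_two_neg_one_pow_div_factorial_mul_factorial (by omega) hse, mul_sum]
  refine sum_congr rfl fun i hi => ?_
  obtain ⟨hi2, his⟩ := mem_Icc.mp hi
  rw [ha i his, ha (s + 2 - i) (by omega), pow_add]
  ring
end

section
/- Let H be symmetric positive definite, L satisfy Lᵀ H + H L = 0, and G = ∑_{k=0}^{s} a_k (hL)^k with a_0 = 1. Suppose b_k = 0 for 1 ≤ k ≤ s-2, b_{s-1} < 0, b_s = a_s² > 0, and h‖L‖ ≤ √(−b_{s-1}/b_s), where ‖L‖ is the H-operator norm. Then ‖G u‖_H ≤ ‖u‖_H for all u. -/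
open Matrix Finset

/-- The `H`-norm of a vector. -/
noncomputable def normH {n : ℕ} (H : Matrix (Fin n) (Fin n) ℝ) (u : Fin n → ℝ) : ℝ :=
  Real.sqrt (u ⬝ᵥ (H *ᵥ u))

/-- The `H`-operator norm of a matrix: `sup_{‖v‖_H = 1} ‖Lv‖_H`. -/
noncomputable def opNormH {n : ℕ} (H L : Matrix (Fin n) (Fin n) ℝ) : ℝ :=
  sSup {x : ℝ | ∃ v : Fin n → ℝ, normH H v = 1 ∧ x = normH H (L *ᵥ v)}

/-!
Skew-adjointness of `L` with respect to `H` gives `⟨L^p u, L^q u⟩_H = (-1)^p ⟨u, L^(p+q) u⟩_H`.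
Expanding `‖G u‖²_H` as a double sum over `p, q ≤ s`, the terms with `p + q` odd cancel against
their transposes and those with `p + q = 2k` all equal `± ‖L^k u‖²_H`; collecting them gives the
energy identity `‖G u‖²_H = ∑ b_k h^(2k) ‖L^k u‖²_H`. Under the hypotheses only `k = 0, s - 1, s`
survive, and since `‖L^s u‖_H ≤ ‖L‖ ‖L^(s-1) u‖_H`, the step-size bound makes the contribution of
`k = s - 1, s` nonpositive.
-/

theorem sum_range_sum_range_eq_sum_even_antidiagonals {M : Type*} [AddCommMonoid M] (s : ℕ)
    (F : ℕ → ℕ → M) (hF : ∀ p q, Odd (p + q) → F p q + F q p = 0) :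
    ∑ p ∈ range (s + 1), ∑ q ∈ range (s + 1), F p q =
      ∑ k ∈ range (s + 1), ∑ i ∈ Icc (max 0 (2 * k - s)) (min (2 * k) s), F i (2 * k - i) := by
  rw [← sum_product', ← sum_filter_add_sum_filter_not _ (fun x => Even (x.1 + x.2))]
  have hodd : ∑ x ∈ range (s + 1) ×ˢ range (s + 1) with ¬Even (x.1 + x.2), F x.1 x.2 = 0 := by
    refine sum_involution (fun x _ => x.swap) (fun x hx => hF _ _ ?_) (fun x hx _ => ?_)
      (fun x hx => ?_) (fun _ _ => rfl)
    all_goals simp only [mem_filter, mem_product, mem_range, Nat.not_even_iff_odd,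
      Nat.odd_iff, ne_eq, Prod.ext_iff, Prod.fst_swap, Prod.snd_swap] at hx ⊢
    all_goals omega
  rw [hodd, add_zero, sum_sigma']
  refine sum_nbij' (fun x => ⟨(x.1 + x.2) / 2, x.1⟩) (fun y => (y.2, 2 * y.1 - y.2))
    ?_ ?_ ?_ ?_ ?_
  · rintro ⟨p, q⟩ hx
    simp only [mem_filter, mem_product, mem_range, mem_sigma, mem_Icc, Nat.even_iff] at hx ⊢
    omega
  · rintro ⟨k, i⟩ hx
    simp only [mem_filter, mem_product, mem_range, mem_sigma, mem_Icc, Nat.even_iff] at hx ⊢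
    omega
  · rintro ⟨p, q⟩ hx
    simp only [mem_filter, Nat.even_iff] at hx
    simp only [Prod.mk.injEq, true_and]
    omega
  · rintro ⟨k, i⟩ hx
    simp only [mem_sigma, mem_Icc] at hx
    simp only [Sigma.mk.injEq, heq_eq_eq, and_true]
    omega
  · rintro ⟨p, q⟩ hx
    simp only [mem_filter, Nat.even_iff] at hx
    dsimp only
    congr
    omega

/-- The paper's `b_k`: the coefficient of `h^(2k) ‖L^k u‖²_H` in `‖G u‖²_H`. -/
def energyCoeff {R : Type*} [CommRing R] (a : ℕ → R) (s k : ℕ) : R :=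
  ∑ i ∈ Icc (max 0 (2 * k - s)) (min (2 * k) s), (-1) ^ (k + i) * a i * a (2 * k - i)

theorem energyCoeff_zero {R : Type*} [CommRing R] (a : ℕ → R) (s : ℕ) :
    energyCoeff a s 0 = a 0 ^ 2 := by
  simp [energyCoeff, sq]

namespace Matrix.IsSkewAdjoint

variable {ι R : Type*} [Fintype ι] [CommRing R] {H L : Matrix ι ι R}

theorem mulVec_dotProduct_mulVec (hL : H.IsSkewAdjoint L) (x y : ι → R) :
    (L *ᵥ x) ⬝ᵥ (H *ᵥ y) = -(x ⬝ᵥ (H *ᵥ (L *ᵥ y))) := by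
  rw [← vecMul_transpose, ← dotProduct_mulVec, mulVec_mulVec, show Lᵀ * H = H * -L from hL,
    mul_neg, neg_mulVec, dotProduct_neg, mulVec_mulVec]

variable [DecidableEq ι]

theorem pow_mulVec_dotProduct_mulVec (hL : H.IsSkewAdjoint L) (p q : ℕ) (x y : ι → R) :
    (L ^ p *ᵥ x) ⬝ᵥ (H *ᵥ (L ^ q *ᵥ y)) = (-1) ^ p * (x ⬝ᵥ (H *ᵥ (L ^ (p + q) *ᵥ y))) := by
  induction p generalizing x with
  | zero => simp
  | succ p ih =>
    rw [pow_succ, ← mulVec_mulVec, ih, hL.mulVec_dotProduct_mulVec, Nat.add_right_comm,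
      pow_succ' L, ← mulVec_mulVec, pow_succ (-1 : R)]
    ring

theorem pow_mulVec_dotProduct_add_swap_of_odd (hL : H.IsSkewAdjoint L) {p q : ℕ}
    (hpq : Odd (p + q)) (u : ι → R) :
    (L ^ p *ᵥ u) ⬝ᵥ (H *ᵥ (L ^ q *ᵥ u)) + (L ^ q *ᵥ u) ⬝ᵥ (H *ᵥ (L ^ p *ᵥ u)) = 0 := by
  have hsign : (-1 : R) ^ p + (-1) ^ q = 0 := by
    rcases Nat.even_or_odd p with hp | hp
    · rw [hp.neg_one_pow, ((Nat.odd_add'.mp hpq).mpr hp).neg_one_pow, add_neg_cancel]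
    · rw [hp.neg_one_pow, (Nat.odd_add.mp hpq |>.mp hp).neg_one_pow, neg_add_cancel]
  rw [hL.pow_mulVec_dotProduct_mulVec, hL.pow_mulVec_dotProduct_mulVec, add_comm q, ← add_mul,
    hsign, zero_mul]

theorem pow_mulVec_dotProduct_mulVec_of_add_eq (hL : H.IsSkewAdjoint L) {i j k : ℕ}
    (hijk : i + j = 2 * k) (u : ι → R) :
    (L ^ i *ᵥ u) ⬝ᵥ (H *ᵥ (L ^ j *ᵥ u)) =
      (-1) ^ (k + i) * ((L ^ k *ᵥ u) ⬝ᵥ (H *ᵥ (L ^ k *ᵥ u))) := by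
  rw [hL.pow_mulVec_dotProduct_mulVec, hL.pow_mulVec_dotProduct_mulVec, hijk, ← two_mul,
    ← mul_assoc, ← pow_add, add_comm k i, add_assoc, ← two_mul, pow_add, pow_mul]
  simp

theorem energy_identity (hL : H.IsSkewAdjoint L) (a : ℕ → R) (s : ℕ) (h : R)
    {G : Matrix ι ι R} (hG : G = ∑ k ∈ range (s + 1), a k • (h • L) ^ k) (u : ι → R) :
    (G *ᵥ u) ⬝ᵥ (H *ᵥ (G *ᵥ u)) = ∑ k ∈ range (s + 1),
      energyCoeff a s k * h ^ (2 * k) * ((L ^ k *ᵥ u) ⬝ᵥ (H *ᵥ (L ^ k *ᵥ u))) := by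
  have hGu : G *ᵥ u = ∑ p ∈ range (s + 1), (a p * h ^ p) • (L ^ p *ᵥ u) := by
    simp only [hG, sum_mulVec, smul_pow, smul_mulVec, smul_smul]
  rw [hGu, sum_dotProduct]
  simp only [mulVec_sum, dotProduct_sum, smul_dotProduct, mulVec_smul, dotProduct_smul,
    smul_eq_mul]
  rw [sum_range_sum_range_eq_sum_even_antidiagonals]
  · refine sum_congr rfl fun k _ => ?_
    rw [energyCoeff, sum_mul, sum_mul]
    refine sum_congr rfl fun i hi => ?_
    have hik : i + (2 * k - i) = 2 * k := by simp only [mem_Icc] at hi; omega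
    rw [hL.pow_mulVec_dotProduct_mulVec_of_add_eq hik,
      show h ^ (2 * k) = h ^ i * h ^ (2 * k - i) by rw [← pow_add, hik]]
    ring
  · intro p q hpq
    linear_combination
      (a p * h ^ p * (a q * h ^ q)) * hL.pow_mulVec_dotProduct_add_swap_of_odd hpq u

end Matrix.IsSkewAdjoint

section normH

variable {n : ℕ} (H : Matrix (Fin n) (Fin n) ℝ)

theorem normH_nonneg (x : Fin n → ℝ) : 0 ≤ normH H x :=
  Real.sqrt_nonneg _

theorem normH_smul (t : ℝ) (x : Fin n → ℝ) : normH H (t • x) = |t| * normH H x := by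
  rw [normH, normH, mulVec_smul, dotProduct_smul, smul_dotProduct, smul_eq_mul, smul_eq_mul,
    ← mul_assoc, ← sq, Real.sqrt_mul (sq_nonneg t), Real.sqrt_sq_eq_abs]

theorem continuous_normH : Continuous (normH H) := by
  unfold normH
  fun_prop

theorem opNormH_nonneg (L : Matrix (Fin n) (Fin n) ℝ) : 0 ≤ opNormH H L :=
  Real.sSup_nonneg (by rintro x ⟨v, -, rfl⟩; exact normH_nonneg H _)

variable {H}

theorem normH_pos (hH : H.PosDef) {x : Fin n → ℝ} (hx : x ≠ 0) : 0 < normH H x :=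
  Real.sqrt_pos.mpr (by simpa using hH.dotProduct_mulVec_pos hx)

theorem normH_sq (hH : H.PosSemidef) (x : Fin n → ℝ) : normH H x ^ 2 = x ⬝ᵥ (H *ᵥ x) :=
  Real.sq_sqrt (by simpa using hH.dotProduct_mulVec_nonneg x)

theorem exists_normH_mulVec_le (hH : H.PosDef) (L : Matrix (Fin n) (Fin n) ℝ) :
    ∃ C, ∀ v, normH H (L *ᵥ v) ≤ C * normH H v := by
  -- The ratio is invariant under scaling, so its bound on the unit sphere holds everywhere.
  obtain ⟨C, hC⟩ := (isCompact_sphere (0 : Fin n → ℝ) 1).bddAbove_image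
    (f := fun v => normH H (L *ᵥ v) / normH H v) <|
    ((continuous_normH H).comp L.mulVecLin.continuous_of_finiteDimensional).continuousOn.div
      (continuous_normH H).continuousOn fun v hv =>
        (normH_pos hH (ne_zero_of_mem_unit_sphere ⟨v, hv⟩)).ne'
  refine ⟨C, fun v => ?_⟩
  rcases eq_or_ne v 0 with rfl | hv
  · simp [normH]
  have hv' : ‖v‖⁻¹ • v ∈ Metric.sphere (0 : Fin n → ℝ) 1 := by
    simp [norm_smul, norm_ne_zero_iff.mpr hv]
  have : normH H (L *ᵥ (‖v‖⁻¹ • v)) / normH H (‖v‖⁻¹ • v) ≤ C := hC ⟨_, hv', rfl⟩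
  rw [mulVec_smul, normH_smul, normH_smul, mul_div_mul_left _ _ (by positivity)] at this
  exact (div_le_iff₀ (normH_pos hH hv)).mp this

theorem normH_mulVec_le_opNormH (hH : H.PosDef) (L : Matrix (Fin n) (Fin n) ℝ) (u : Fin n → ℝ) :
    normH H (L *ᵥ u) ≤ opNormH H L * normH H u := by
  rcases eq_or_ne u 0 with rfl | hu
  · simp [normH]
  obtain ⟨C, hC⟩ := exists_normH_mulVec_le hH L
  have hbdd : BddAbove {x : ℝ | ∃ v : Fin n → ℝ, normH H v = 1 ∧ x = normH H (L *ᵥ v)} :=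
    ⟨C, by rintro x ⟨v, hv, rfl⟩; simpa [hv] using hC v⟩
  have hr := normH_pos hH hu
  have hunit : normH H ((normH H u)⁻¹ • u) = 1 := by
    rw [normH_smul, abs_of_pos (inv_pos.mpr hr), inv_mul_cancel₀ hr.ne']
  have := le_csSup hbdd ⟨_, hunit, rfl⟩
  rwa [mulVec_smul, normH_smul, abs_of_pos (inv_pos.mpr hr), inv_mul_le_iff₀ hr, mul_comm] at this

end normH

theorem mul_sq_add_mul_sq_nonpos_of_le_sqrt {b₁ b₂ c x y : ℝ} (hb₁ : b₁ ≤ 0) (hb₂ : 0 < b₂)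
    (hc : 0 ≤ c) (hc_le : c ≤ Real.sqrt (-b₁ / b₂)) (hy : 0 ≤ y) (hyx : y ≤ c * x) :
    b₁ * x ^ 2 + b₂ * y ^ 2 ≤ 0 := by
  have hc2 : c ^ 2 * b₂ ≤ -b₁ := by
    rwa [← le_div_iff₀ hb₂, ← Real.le_sqrt hc (div_nonneg (neg_nonneg.mpr hb₁) hb₂.le)]
  have hy2 : y ^ 2 ≤ c ^ 2 * x ^ 2 := by
    rw [← mul_pow]; exact pow_le_pow_left₀ hy hyx 2
  nlinarith

theorem strong_stability_criterion_general {n : ℕ}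
    (H L : Matrix (Fin n) (Fin n) ℝ)
    (hH : H.PosDef)
    (hL : Lᵀ * H + H * L = 0)
    (s : ℕ) (hs : 2 ≤ s) (a : ℕ → ℝ) (h : ℝ) (hh : 0 < h) (ha0 : a 0 = 1)
    (G : Matrix (Fin n) (Fin n) ℝ)
    (hG : G = ∑ k ∈ Finset.range (s + 1), a k • (h • L) ^ k)
    (b : ℕ → ℝ)
    (hb : ∀ k, b k = ∑ i ∈ Finset.Icc (max 0 (2 * k - s)) (min (2 * k) s),
      (-1 : ℝ) ^ (k + i) * a i * a (2 * k - i))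
    (hbvanish : ∀ k, 1 ≤ k → k ≤ s - 2 → b k = 0)
    (hbs1 : b (s - 1) < 0)
    (hbs : b s = (a s) ^ 2) (has : a s ≠ 0)
    (hstep : h * opNormH H L ≤ Real.sqrt (-b (s - 1) / b s)) :
    ∀ u : Fin n → ℝ, normH H (G *ᵥ u) ≤ normH H u := by
  intro u
  obtain ⟨m, rfl⟩ : ∃ m, s = m + 2 := ⟨s - 2, by omega⟩
  rw [show m + 2 - 1 = m + 1 from rfl] at hbs1 hstep
  have hb' : b = energyCoeff a (m + 2) := funext hb
  have hskew : H.IsSkewAdjoint L := by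
    rw [Matrix.IsSkewAdjoint, Matrix.IsAdjointPair, mul_neg, eq_neg_iff_add_eq_zero, hL]
  set ν : ℕ → ℝ := fun k => normH H (L ^ k *ᵥ u)
  have henergy : (G *ᵥ u) ⬝ᵥ (H *ᵥ (G *ᵥ u)) = u ⬝ᵥ (H *ᵥ u) +
      h ^ (2 * (m + 1)) * (b (m + 1) * ν (m + 1) ^ 2 + b (m + 2) * (h * ν (m + 2)) ^ 2) := by
    rw [hskew.energy_identity a (m + 2) h hG u, ← hb', sum_range_succ, sum_range_succ,
      sum_range_succ', sum_eq_zero fun k hk => by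
        rw [hbvanish (k + 1) (by omega) (by rw [mem_range] at hk; omega), zero_mul, zero_mul]]
    simp only [ν, mul_pow, normH_sq hH.posSemidef, hb', energyCoeff_zero, ha0, one_pow, pow_zero,
      mul_zero, one_mulVec, one_mul, zero_add]
    ring
  have hLu : ν (m + 2) ≤ opNormH H L * ν (m + 1) := by
    show normH H (L ^ (m + 1 + 1) *ᵥ u) ≤ _
    rw [pow_succ', ← mulVec_mulVec]
    exact normH_mulVec_le_opNormH hH L _
  have htail : b (m + 1) * ν (m + 1) ^ 2 + b (m + 2) * (h * ν (m + 2)) ^ 2 ≤ 0 := by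
    refine mul_sq_add_mul_sq_nonpos_of_le_sqrt hbs1.le (by rw [hbs]; positivity)
      (mul_nonneg hh.le (opNormH_nonneg H L)) hstep (mul_nonneg hh.le (normH_nonneg H _)) ?_
    rw [mul_assoc]
    exact mul_le_mul_of_nonneg_left hLu hh.le
  rw [normH, normH, henergy]
  exact Real.sqrt_le_sqrt <| add_le_of_nonpos_right (mul_nonpos_of_nonneg_of_nonpos (by positivity) htail)

theorem strong_stability_criterion {n : ℕ}
    (H L : Matrix (Fin n) (Fin n) ℝ)
    (hH : H.PosDef) (hHsymm : H.IsSymm)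
    (hL : Lᵀ * H + H * L = 0)
    (s : ℕ) (hs : 2 ≤ s) (a : ℕ → ℝ) (h : ℝ) (hh : 0 < h) (ha0 : a 0 = 1)
    (G : Matrix (Fin n) (Fin n) ℝ)
    (hG : G = ∑ k ∈ Finset.range (s + 1), a k • (h • L) ^ k)
    (b : ℕ → ℝ)
    (hb : ∀ k, b k = ∑ i ∈ Finset.Icc (max 0 (2 * k - s)) (min (2 * k) s),
      (-1 : ℝ) ^ (k + i) * a i * a (2 * k - i))
    (hbvanish : ∀ k, 1 ≤ k → k ≤ s - 2 → b k = 0)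
    (hbs1 : b (s - 1) < 0)
    (hbs : b s = (a s) ^ 2) (has : a s ≠ 0)
    (hstep : h * opNormH H L ≤ Real.sqrt (-b (s - 1) / b s)) :
    ∀ u : Fin n → ℝ, normH H (G *ᵥ u) ≤ normH H u :=
  strong_stability_criterion_general H L hH hL s hs a h hh ha0 G hG b hb hbvanish hbs1 hbs has hstep
end

section
/- If s ≥ 3 is odd, a_k = 1/k! for 0 ≤ k ≤ s-1, and a_s = 1/s! - 1/(s+1)!, then b_k = 0 for 1 ≤ k ≤ (s+1)/2, where b_k = ∑_{i=max(0,2k-s)}^{min(2k,s)} (-1)^{k+i} a_i a_{2k-i}. In particular the energy accuracy order is at least s + 2. -/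
/-!
Write `c i = 1 / i!`. For `n ≠ 0` the alternating sum `∑ (-1)^i c i c (n - i)` is `(1 - 1)^n / n! = 0`.
When `2k ≤ s - 1`, `b_k` only involves unmodified coefficients, so it is such a sum. When
`2k = s + 1`, `b_k` runs over `1 ≤ i ≤ s`: it misses the two end terms `i = 0, s + 1` of the
vanishing sum, each equal to `(-1)^k / (s+1)!`, while the modification of `a s` changes the
terms `i = 1` and `i = s` by exactly `(-1)^k / (s+1)!` each, since `s` is odd.
-/

open Finset Nat

theorem Finset.sum_Icc_eq_add_sum_Ioo_add {α M : Type*} [PartialOrder α] [LocallyFiniteOrder α]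
    [AddCommMonoid M] (f : α → M) {a b : α} (h : a < b) :
    ∑ x ∈ Icc a b, f x = f a + ∑ x ∈ Ioo a b, f x + f b := by
  rw [← add_sum_Ioc_eq_sum_Icc h.le, ← sum_Ioo_add_eq_sum_Ioc h, add_assoc]

section InvFactorial

variable {K : Type*} [Field K] [CharZero K]

theorem sum_Icc_neg_one_pow_mul_eq_zero_of_eq_inv_factorial {a : ℕ → K} {n : ℕ} (hn : n ≠ 0)
    (ha : ∀ i ≤ n, a i = 1 / (i ! : K)) :
    ∑ i ∈ Icc 0 n, (-1 : K) ^ i * a i * a (n - i) = 0 := by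
  have hterm : ∀ i ∈ Icc 0 n, (-1 : K) ^ i * a i * a (n - i) = (-1) ^ i * n.choose i / n ! := by
    intro i hi
    have hin : i ≤ n := (mem_Icc.mp hi).2
    rw [ha i hin, ha (n - i) (Nat.sub_le n i), Nat.cast_choose K hin,
      mul_div_assoc, div_div_cancel_left' (cast_ne_zero.mpr n.factorial_ne_zero)]
    field_simp
  have hchoose : ∑ i ∈ range (n + 1), (-1 : K) ^ i * n.choose i = 0 := by
    exact_mod_cast Int.alternating_sum_range_choose_of_ne hn
  rw [sum_congr rfl hterm, ← sum_div, ← range_succ_eq_Icc_zero, hchoose, zero_div]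

theorem sum_Icc_one_neg_one_pow_mul_eq_zero_of_modified_last {a : ℕ → K} {s : ℕ} (hs : 3 ≤ s)
    (hso : Odd s) (ha : ∀ i ≤ s - 1, a i = 1 / (i ! : K))
    (has : a s = 1 / (s ! : K) - 1 / ((s + 1)! : K)) :
    ∑ i ∈ Icc 1 s, (-1 : K) ^ i * a i * a (s + 1 - i) = 0 := by
  set c : ℕ → K := fun i => 1 / (i ! : K)
  have hfull : ∑ i ∈ Icc 0 (s + 1), (-1 : K) ^ i * c i * c (s + 1 - i) = 0 :=
    sum_Icc_neg_one_pow_mul_eq_zero_of_eq_inv_factorial (succ_ne_zero s) fun _ _ => rfl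
  have hIoo : Ioo 0 (s + 1) = Icc 1 s := by
    ext i
    simp only [mem_Ioo, mem_Icc]
    omega
  rw [sum_Icc_eq_add_sum_Ioo_add _ (succ_pos s), hIoo,
    sum_Icc_eq_add_sum_Ioo_add _ (by omega : 1 < s)] at hfull
  have hmid : ∑ i ∈ Ioo 1 s, (-1 : K) ^ i * a i * a (s + 1 - i) =
      ∑ i ∈ Ioo 1 s, (-1 : K) ^ i * c i * c (s + 1 - i) := by
    refine sum_congr rfl fun i hi => ?_
    have hi' := mem_Ioo.mp hi
    rw [ha i (by omega), ha (s + 1 - i) (by omega)]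
  have ha1 : a 1 = 1 := by
    rw [ha 1 (by omega)]
    simp
  have hsign : (-1 : K) ^ s = -1 := hso.neg_one_pow
  rw [sum_Icc_eq_add_sum_Ioo_add _ (by omega : 1 < s), hmid]
  simp only [c, Nat.add_sub_cancel, Nat.add_sub_cancel_left, Nat.sub_self, pow_succ, hsign, ha1,
    has] at hfull ⊢
  linear_combination hfull

end InvFactorial

theorem bk_vanish_odd_stage (s : ℕ) (hs : 3 ≤ s) (hso : Odd s)
    (a : ℕ → ℝ)
    (ha : ∀ k ≤ s - 1, a k = 1 / (Nat.factorial k : ℝ))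
    (has : a s = 1 / (Nat.factorial s : ℝ) - 1 / (Nat.factorial (s + 1) : ℝ))
    (k : ℕ) (hk1 : 1 ≤ k) (hk2 : k ≤ (s + 1) / 2) :
    ∑ i ∈ Finset.Icc (max 0 (2 * k - s)) (min (2 * k) s),
        (-1 : ℝ) ^ (k + i) * a i * a (2 * k - i) = 0 := by
  have hfactor : ∀ i, (-1 : ℝ) ^ (k + i) * a i * a (2 * k - i) =
      (-1) ^ k * ((-1) ^ i * a i * a (2 * k - i)) := fun i => by ring
  simp_rw [hfactor, ← mul_sum]
  refine mul_eq_zero_of_right _ ?_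
  obtain hlow | hedge : 2 * k ≤ s - 1 ∨ 2 * k = s + 1 := by
    have := Nat.odd_iff.mp hso
    omega
  · rw [show max 0 (2 * k - s) = 0 by omega, show min (2 * k) s = 2 * k by omega]
    exact sum_Icc_neg_one_pow_mul_eq_zero_of_eq_inv_factorial (by omega) fun i hi => ha i (by omega)
  · rw [show max 0 (2 * k - s) = 1 by omega, show min (2 * k) s = s by omega, hedge]
    exact sum_Icc_one_neg_one_pow_mul_eq_zero_of_modified_last hs hso ha has
end

section
/- If s ≥ 6 is even, a_k = 1/k! for 0 ≤ k ≤ s-2, a_{s-1} = 3/(s+2)! - 3/(s+1)! + 1/(s-1)!, and a_s = 3/(s+2)! - 3/(s+1)! + 1/s!, then b_k = 0 for 1 ≤ k ≤ (s+2)/2, where b_k = ∑_{i=max(0,2k-s)}^{min(2k,s)} (-1)^{k+i} a_i a_{2k-i}. -/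
/-!
With `a i = 1 / i!`, the sum `∑ i, (-1)^i a_i a_(n-i)` is the coefficient of `z^n` in
`exp z * exp (-z) = 1`, i.e. `(1 - 1)^n / n! = 0` for `n ≠ 0`. For even `n` its terms are
symmetric under `i ↦ n - i`, so the perturbation `c = 3 (1/(s+2)! - 1/(s+1)!)` of `a (s-1)` and
`a s` only enters through the two outermost pairs of terms. For `2k = s` these contribute `2c` and
`-2c`. For `2k = s + 2` the sum lacks the terms `i = 0, 1, s+1, s+2` of the full binomial sum,
worth `2 (1/(s+2)! - 1/(s+1)!)`, and the perturbation contributes exactly that amount,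
`2c (1/2! - 1/3!) = 2c/3`.
-/

open Finset Nat

theorem sum_Icc_eq_add_sum_Icc_add {M : Type*} [AddCommMonoid M] (f : ℕ → M) {lo hi : ℕ}
    (h : lo < hi) :
    ∑ i ∈ Icc lo hi, f i = f lo + ∑ i ∈ Icc (lo + 1) (hi - 1), f i + f hi := by
  have hIoo : Icc (lo + 1) (hi - 1) = Ioo lo hi := by ext; simp; omega
  rw [hIoo, ← add_sum_Ioc_eq_sum_Icc h.le, ← add_sum_Ioo_eq_sum_Ioc h, add_comm (f hi),
    add_assoc]

theorem sum_Icc_eq_two_nsmul_add_of_symm {M : Type*} [AddCommMonoid M] {f : ℕ → M} {n lo : ℕ}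
    (hf : ∀ i ≤ n, f (n - i) = f i) (h : lo < n - lo) :
    ∑ i ∈ Icc lo (n - lo), f i = 2 • f lo + ∑ i ∈ Icc (lo + 1) (n - (lo + 1)), f i := by
  rw [sum_Icc_eq_add_sum_Icc_add f h, hf lo (by omega), show n - lo - 1 = n - (lo + 1) by omega,
    two_nsmul, add_right_comm]

noncomputable def expCoeff (n : ℕ) : ℝ := 1 / (n ! : ℝ)

@[simp]
theorem expCoeff_zero : expCoeff 0 = 1 := by simp [expCoeff]

@[simp]
theorem expCoeff_one : expCoeff 1 = 1 := by simp [expCoeff]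

/-- Summed over `i`, these are the coefficients of `R(z) R(-z)` for `R(z) = ∑ a_i z^i`. -/
def alternatingConvTerm (a : ℕ → ℝ) (n i : ℕ) : ℝ := (-1) ^ i * a i * a (n - i)

theorem sum_Icc_alternatingConvTerm_expCoeff {n : ℕ} (hn : n ≠ 0) :
    ∑ i ∈ Icc 0 n, alternatingConvTerm expCoeff n i = 0 := by
  have hchoose : ∑ i ∈ range (n + 1), (-1 : ℝ) ^ i * (n.choose i : ℝ) = 0 := by
    exact_mod_cast Int.alternating_sum_range_choose_of_ne hn
  have hterm : ∀ i ∈ range (n + 1),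
      alternatingConvTerm expCoeff n i = (-1 : ℝ) ^ i * (n.choose i : ℝ) / (n ! : ℝ) := by
    intro i hi
    have hin : i ≤ n := Nat.lt_succ_iff.mp (mem_range.mp hi)
    rw [alternatingConvTerm, expCoeff, expCoeff, Nat.choose_eq_factorial_div_factorial hin,
      Nat.cast_div (Nat.factorial_mul_factorial_dvd_factorial hin) (by positivity)]
    push_cast
    field_simp
  rw [show Icc 0 n = range (n + 1) by ext; simp, sum_congr rfl hterm, ← sum_div,
    hchoose, zero_div]

theorem sum_Icc_alternatingConvTerm_congr {a b : ℕ → ℝ} {m n lo hi : ℕ}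
    (hab : ∀ i ≤ m, a i = b i) (hlo : n ≤ lo + m) (hhi : hi ≤ m) :
    ∑ i ∈ Icc lo hi, alternatingConvTerm a n i
      = ∑ i ∈ Icc lo hi, alternatingConvTerm b n i := by
  refine sum_congr rfl fun i hi => ?_
  rw [mem_Icc] at hi
  rw [alternatingConvTerm, alternatingConvTerm, hab i (by omega), hab (n - i) (by omega)]

theorem alternatingConvTerm_sub_self (a : ℕ → ℝ) {n i : ℕ} (hn : Even n) (hi : i ≤ n) :
    alternatingConvTerm a n (n - i) = alternatingConvTerm a n i := by
  have hsign : (-1 : ℝ) ^ (n - i) = (-1) ^ i :=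
    neg_one_pow_congr (by rw [Nat.even_sub hi]; simp [hn])
  rw [alternatingConvTerm, alternatingConvTerm, hsign, Nat.sub_sub_self hi]
  ring

theorem sum_Icc_alternatingConvTerm_peel (a : ℕ → ℝ) {n lo : ℕ} (hn : Even n)
    (h : 2 * lo + 2 < n) :
    ∑ i ∈ Icc lo (n - lo), alternatingConvTerm a n i
      = 2 * (alternatingConvTerm a n lo + alternatingConvTerm a n (lo + 1))
        + ∑ i ∈ Icc (lo + 2) (n - (lo + 2)), alternatingConvTerm a n i := by
  have hf : ∀ i ≤ n, alternatingConvTerm a n (n - i) = alternatingConvTerm a n i :=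
    fun _ hi => alternatingConvTerm_sub_self a hn hi
  rw [sum_Icc_eq_two_nsmul_add_of_symm hf (by omega),
    sum_Icc_eq_two_nsmul_add_of_symm hf (by omega)]
  ring

theorem sum_Icc_alternatingConvTerm_of_perturb_top {a : ℕ → ℝ} {s : ℕ} (c : ℝ)
    (hs : 4 ≤ s) (hse : Even s) (ha : ∀ i ≤ s - 2, a i = expCoeff i)
    (has1 : a (s - 1) = expCoeff (s - 1) + c) (has : a s = expCoeff s + c) :
    ∑ i ∈ Icc 0 s, alternatingConvTerm a s i = 0 := by
  have hA : ∑ i ∈ Icc 0 s, alternatingConvTerm a s i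
      = 2 * (alternatingConvTerm a s 0 + alternatingConvTerm a s 1)
        + ∑ i ∈ Icc 2 (s - 2), alternatingConvTerm a s i :=
    sum_Icc_alternatingConvTerm_peel a hse (lo := 0) (by omega)
  have hE : ∑ i ∈ Icc 0 s, alternatingConvTerm expCoeff s i
      = 2 * (alternatingConvTerm expCoeff s 0 + alternatingConvTerm expCoeff s 1)
        + ∑ i ∈ Icc 2 (s - 2), alternatingConvTerm expCoeff s i :=
    sum_Icc_alternatingConvTerm_peel expCoeff hse (lo := 0) (by omega)
  rw [sum_Icc_alternatingConvTerm_expCoeff (by omega)] at hE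
  rw [hA, sum_Icc_alternatingConvTerm_congr ha (by omega) le_rfl]
  simp only [alternatingConvTerm, Nat.sub_zero, ha 0 (by omega), ha 1 (by omega), has, has1,
    expCoeff_zero, expCoeff_one] at hE ⊢
  linear_combination -hE

theorem sum_Icc_alternatingConvTerm_of_perturb_top_add_two {a : ℕ → ℝ} {s : ℕ}
    (hs : 6 ≤ s) (hse : Even s) (ha : ∀ i ≤ s - 2, a i = expCoeff i)
    (has1 : a (s - 1) = expCoeff (s - 1) + 3 * (expCoeff (s + 2) - expCoeff (s + 1)))
    (has : a s = expCoeff s + 3 * (expCoeff (s + 2) - expCoeff (s + 1))) :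
    ∑ i ∈ Icc 2 s, alternatingConvTerm a (s + 2) i = 0 := by
  have hn : Even (s + 2) := hse.add even_two
  have hA : ∑ i ∈ Icc 2 s, alternatingConvTerm a (s + 2) i
      = 2 * (alternatingConvTerm a (s + 2) 2 + alternatingConvTerm a (s + 2) 3)
        + ∑ i ∈ Icc 4 (s - 2), alternatingConvTerm a (s + 2) i :=
    sum_Icc_alternatingConvTerm_peel a hn (lo := 2) (by omega)
  have hE₀ : ∑ i ∈ Icc 0 (s + 2), alternatingConvTerm expCoeff (s + 2) i
      = 2 * (alternatingConvTerm expCoeff (s + 2) 0 + alternatingConvTerm expCoeff (s + 2) 1)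
        + ∑ i ∈ Icc 2 s, alternatingConvTerm expCoeff (s + 2) i :=
    sum_Icc_alternatingConvTerm_peel expCoeff hn (n := s + 2) (lo := 0) (by omega)
  have hE₂ : ∑ i ∈ Icc 2 s, alternatingConvTerm expCoeff (s + 2) i
      = 2 * (alternatingConvTerm expCoeff (s + 2) 2 + alternatingConvTerm expCoeff (s + 2) 3)
        + ∑ i ∈ Icc 4 (s - 2), alternatingConvTerm expCoeff (s + 2) i :=
    sum_Icc_alternatingConvTerm_peel expCoeff hn (lo := 2) (by omega)
  have h2 : expCoeff 2 = 1 / 2 := by norm_num [expCoeff]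
  have h3 : expCoeff 3 = 1 / 6 := by norm_num [expCoeff, Nat.factorial]
  rw [sum_Icc_alternatingConvTerm_expCoeff (by omega)] at hE₀
  rw [hA, sum_Icc_alternatingConvTerm_congr ha (by omega) le_rfl]
  simp only [alternatingConvTerm, show s + 2 - 2 = s by omega, show s + 2 - 3 = s - 1 by omega,
    show s + 2 - 1 = s + 1 by omega, Nat.sub_zero, ha 2 (by omega), ha 3 (by omega), has, has1,
    expCoeff_zero, expCoeff_one, h2, h3] at hE₀ hE₂ ⊢
  linear_combination -hE₀ - hE₂

theorem bk_vanish_even_stage (s : ℕ) (hs : 6 ≤ s) (hse : Even s)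
    (a : ℕ → ℝ)
    (ha : ∀ k ≤ s - 2, a k = 1 / (Nat.factorial k : ℝ))
    (has1 : a (s - 1) = 3 / (Nat.factorial (s + 2) : ℝ) - 3 / (Nat.factorial (s + 1) : ℝ)
      + 1 / (Nat.factorial (s - 1) : ℝ))
    (has : a s = 3 / (Nat.factorial (s + 2) : ℝ) - 3 / (Nat.factorial (s + 1) : ℝ)
      + 1 / (Nat.factorial s : ℝ))
    (k : ℕ) (hk1 : 1 ≤ k) (hk2 : k ≤ (s + 2) / 2) :
    ∑ i ∈ Finset.Icc (max 0 (2 * k - s)) (min (2 * k) s),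
        (-1 : ℝ) ^ (k + i) * a i * a (2 * k - i) = 0 := by
  have has1' : a (s - 1) = expCoeff (s - 1) + 3 * (expCoeff (s + 2) - expCoeff (s + 1)) := by
    rw [has1]; simp only [expCoeff]; ring
  have has' : a s = expCoeff s + 3 * (expCoeff (s + 2) - expCoeff (s + 1)) := by
    rw [has]; simp only [expCoeff]; ring
  have hterm : ∀ i, (-1 : ℝ) ^ (k + i) * a i * a (2 * k - i)
      = (-1) ^ k * alternatingConvTerm a (2 * k) i := fun i => by
    rw [alternatingConvTerm, pow_add]; ring
  simp_rw [hterm, ← mul_sum, max_eq_right (Nat.zero_le _)]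
  refine mul_eq_zero_of_right _ ?_
  obtain ⟨m, hm⟩ := id hse
  rcases (show 2 * k ≤ s - 2 ∨ 2 * k = s ∨ 2 * k = s + 2 by omega) with h | h | h
  · rw [show 2 * k - s = 0 by omega, min_eq_left (by omega),
      sum_Icc_alternatingConvTerm_congr ha (by omega) (by omega)]
    exact sum_Icc_alternatingConvTerm_expCoeff (by omega)
  · rw [h, Nat.sub_self, min_self]
    exact sum_Icc_alternatingConvTerm_of_perturb_top _ (by omega) hse ha has1' has'
  · rw [h, Nat.add_sub_cancel_left, min_eq_right (by omega)]
    exact sum_Icc_alternatingConvTerm_of_perturb_top_add_two hs hse ha has1' has'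
end
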